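/- arXiv:2209.05298 — 8 statements merged into one kernel-verified Lean document; each statement's English description precedes it below -/
import Mathlib

section
/- Let G be a group and m : G → ℂ a function such that m(g) depends only on the sign of g with respect to a left-invariant total order (m(g) = 1 if e < g, m(e) = 0, m(g) = -1 if g < e). Then for all g ∈ G with g ≠ e and all h ∈ G, (m(g⁻¹) - m(h)) * (m(g·h) - m(g)) = 0. -/
/-- Cotlar's factorization identity for the sign function of a left-invariant
total order on a group. -/
theorem cotlar_sign_left_orderable {G : Type*} [Group G] [LinearOrder G]
    (hleft : ∀ a g h : G, g < h → a * g < a * h)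
    (sgn : G → ℂ)
    (hsgn : ∀ g : G, sgn g = if 1 < g then 1 else if g = 1 then 0 else -1) :
    ∀ g : G, g ≠ 1 → ∀ h : G, (sgn g⁻¹ - sgn h) * (sgn (g * h) - sgn g) = 0 := by
  intro g hg h
  have inv_lt : ∀ a : G, 1 < a → a⁻¹ < 1 := fun a ha => by
    have := hleft a⁻¹ 1 a ha; simpa using this
  have inv_gt : ∀ a : G, a < 1 → 1 < a⁻¹ := fun a ha => by
    have := hleft a⁻¹ a 1 ha; simpa using this
  rcases lt_trichotomy g 1 with hg1 | hg1 | hg1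
  · have hginv : 1 < g⁻¹ := inv_gt g hg1
    rcases lt_trichotomy h 1 with hh | hh | hh
    · have hgh : g * h < 1 := lt_trans (by simpa using hleft g h 1 hh) hg1
      simp [hsgn, hg1.not_gt, hg1.ne, hh.not_gt, hh.ne, hgh.not_gt, hgh.ne, hginv]
    · subst hh
      simp [hsgn, hg1.not_gt, hg1.ne, hginv]
    · -- sgn h = 1 = sgn g⁻¹
      simp [hsgn, hh, hginv]
  · exact absurd hg1 hg
  · have hginv : g⁻¹ < 1 := inv_lt g hg1
    rcases lt_trichotomy h 1 with hh | hh | hh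
    · simp [hsgn, hh.not_gt, hh.ne, hginv.not_gt, hginv.ne]
    · subst hh
      simp [hsgn, hg1, hg1.ne', hginv.not_gt, hginv.ne]
    · have hgh : 1 < g * h := lt_trans hg1 (by simpa using hleft g 1 h hh)
      simp [hsgn, hg1, hgh, hh]
end

section
/- For all integers a, b, c, d with a·d - b·c = 1 and all reals x, y, if x·(a·b + c·d) > 0 then (a·c·(x² + y²) + (a·d + b·c)·x + b·d)·(a·c + b·d) ≥ 0. -/
/-- The key inequality in the proof that the Hilbert transform symbol on
`PSL₂(ℤ)` satisfies Cotlar's identity. -/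
theorem cotlar_psl2z_key_inequality (a b c d : ℤ) (h : a * d - b * c = 1)
    (x y : ℝ) (hx : x * ((a : ℝ) * b + c * d) > 0) :
    0 ≤ ((a : ℝ) * c * (x ^ 2 + y ^ 2) + ((a : ℝ) * d + (b : ℝ) * c) * x
        + (b : ℝ) * d) * ((a : ℝ) * c + (b : ℝ) * d) := by
  -- integer facts
  have hPR : 0 ≤ (a * c) * (b * d) := by nlinarith [sq_nonneg (a * d + b * c)]
  have hprod : (a ^ 2 + c ^ 2) * (b ^ 2 + d ^ 2) = 1 + (a * b + c * d) ^ 2 := by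
    nlinarith [h]
  have hac2 : 1 ≤ a ^ 2 + c ^ 2 := by
    nlinarith [sq_nonneg (a * b + c * d), sq_nonneg b, sq_nonneg d,
      sq_nonneg a, sq_nonneg c]
  have hbd2 : 1 ≤ b ^ 2 + d ^ 2 := by
    nlinarith [sq_nonneg (a * b + c * d), sq_nonneg b, sq_nonneg d,
      sq_nonneg a, sq_nonneg c]
  have hQT : (a * d + b * c) * (a * b + c * d)
      = (b * d) * (a ^ 2 + c ^ 2) + (a * c) * (b ^ 2 + d ^ 2) := by ring
  rcases lt_trichotomy (a * c + b * d) 0 with hS | hS | hS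
  · -- S < 0 : then ac ≤ 0, bd ≤ 0, QT ≤ S < 0
    have hP : a * c ≤ 0 := by nlinarith
    have hR : b * d ≤ 0 := by nlinarith
    have hQTneg : (a * d + b * c) * (a * b + c * d) < 0 := by nlinarith
    -- cast to ℝ
    have hPℝ : (a : ℝ) * c ≤ 0 := by exact_mod_cast hP
    have hRℝ : (b : ℝ) * d ≤ 0 := by exact_mod_cast hR
    have hSℝ : (a : ℝ) * c + (b : ℝ) * d < 0 := by exact_mod_cast hS
    have hQTℝ : (((a : ℝ) * d + b * c)) * ((a : ℝ) * b + c * d) < 0 := by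
      exact_mod_cast hQTneg
    have hQx : ((a : ℝ) * d + b * c) * x < 0 := by
      nlinarith [sq_nonneg ((a : ℝ) * b + c * d)]
    have hsq : (0:ℝ) ≤ x ^ 2 + y ^ 2 := by positivity
    nlinarith [mul_nonneg (neg_nonneg.mpr hPℝ) hsq]
  · -- S = 0
    have hSℝ : (a : ℝ) * c + (b : ℝ) * d = 0 := by exact_mod_cast hS
    rw [hSℝ, mul_zero]
  · -- S > 0 : then ac ≥ 0, bd ≥ 0, QT ≥ S > 0
    have hP : 0 ≤ a * c := by nlinarith
    have hR : 0 ≤ b * d := by nlinarith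
    have hQTpos : 0 < (a * d + b * c) * (a * b + c * d) := by nlinarith
    have hPℝ : (0:ℝ) ≤ (a : ℝ) * c := by exact_mod_cast hP
    have hRℝ : (0:ℝ) ≤ (b : ℝ) * d := by exact_mod_cast hR
    have hSℝ : (0:ℝ) < (a : ℝ) * c + (b : ℝ) * d := by exact_mod_cast hS
    have hQTℝ : (0:ℝ) < (((a : ℝ) * d + b * c)) * ((a : ℝ) * b + c * d) := by
      exact_mod_cast hQTpos
    have hQx : (0:ℝ) < ((a : ℝ) * d + b * c) * x := by
      nlinarith [sq_nonneg ((a : ℝ) * b + c * d)]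
    have hsq : (0:ℝ) ≤ x ^ 2 + y ^ 2 := by positivity
    nlinarith [mul_nonneg hPℝ hsq]
end

section
/- Let a, b, c, d be Gaussian integers (elements of ℤ[i]) with a·d - b·c = 1, written a = a₁ + i·a₂, b = b₁ + i·b₂, c = c₁ + i·c₂, d = d₁ + i·d₂ with integer real and imaginary parts. Then 0 ≤ (a₁·d₁ + b₂·c₂)·(b₁·c₁ + a₂·d₂) and (a₁·d₁ + b₂·c₂)·(b₁·c₁ + a₂·d₂) ≤ (a₁·c₁ + a₂·c₂)·(b₁·d₁ + b₂·d₂). -/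
/-- Key inequality for Gaussian-integer matrices of determinant one. -/
theorem gaussian_det_one_inequality (a b c d : GaussianInt)
    (h : a * d - b * c = 1) :
    0 ≤ (a.re * d.re + b.im * c.im) * (b.re * c.re + a.im * d.im) ∧
      (a.re * d.re + b.im * c.im) * (b.re * c.re + a.im * d.im) ≤
        (a.re * c.re + a.im * c.im) * (b.re * d.re + b.im * d.im) := by
  have h1 := congrArg Zsqrtd.re h
  have h2 := congrArg Zsqrtd.im h
  simp [Zsqrtd.re_mul, Zsqrtd.im_mul, Zsqrtd.re_sub, Zsqrtd.im_sub] at h1 h2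
  constructor
  · rcases le_or_gt 0 (b.re * c.re + a.im * d.im) with hq | hq
    · nlinarith
    · have hq' : b.re * c.re + a.im * d.im + 1 ≤ 0 := Int.add_one_le_of_lt hq
      nlinarith
  · nlinarith [sq_nonneg (a.re * d.im - b.re * c.im), sq_nonneg (a.im * d.re - b.im * c.re)]
end

section
/- Let a, b, c, d ∈ ℤ[i] with a·d - b·c = 1. If Re(a·conj(c)) ≠ 0 and Re(b·conj(d)) ≠ 0, then Re(a·conj(c)) and Re(b·conj(d)) have the same sign (their product is positive). -/
lemma gaussian_same_sign_aux (a1 a2 b1 b2 c1 c2 d1 d2 : ℤ)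
    (h1 : a1 * d1 - a2 * d2 - (b1 * c1 - b2 * c2) = 1)
    (h2 : a1 * d2 + a2 * d1 - (b1 * c2 + b2 * c1) = 0)
    (hac : a1 * c1 + a2 * c2 ≠ 0) (hbd : b1 * d1 + b2 * d2 ≠ 0) :
    0 < (a1 * c1 + a2 * c2) * (b1 * d1 + b2 * d2) := by
  set u : ℤ := a2 * d2 + b1 * c1 with hu
  set s : ℤ := a2 * d1 - b2 * c1 with hs
  have key : (a1 * c1 + a2 * c2) * (b1 * d1 + b2 * d2) = u * (u + 1) + s ^ 2 := by
    linear_combination u * h1 - s * h2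
  have huu : 0 ≤ u * (u + 1) := by
    rcases le_or_gt 0 u with h' | h'
    · positivity
    · nlinarith [mul_nonneg (neg_nonneg.2 h'.le) (neg_nonneg.2 (by omega : u + 1 ≤ 0))]
  have hnn : 0 ≤ (a1 * c1 + a2 * c2) * (b1 * d1 + b2 * d2) := by
    rw [key]; positivity
  exact lt_of_le_of_ne hnn (Ne.symm (mul_ne_zero hac hbd))

/-- For a determinant-one matrix over the Gaussian integers, `Re(a·conj c)` and
`Re(b·conj d)` have the same sign whenever both are nonzero. -/
theorem gaussian_same_sign (a b c d : GaussianInt) (h : a * d - b * c = 1)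
    (hac : (a * star c).re ≠ 0) (hbd : (b * star d).re ≠ 0) :
    0 < (a * star c).re * (b * star d).re := by
  have hre : (a * d - b * c).re = 1 := by rw [h]; rfl
  have him : (a * d - b * c).im = 0 := by rw [h]; rfl
  simp only [Zsqrtd.re_sub, Zsqrtd.im_sub, Zsqrtd.re_mul, Zsqrtd.im_mul] at hre him
  simp only [Zsqrtd.re_mul, Zsqrtd.im_mul, Zsqrtd.re_star, Zsqrtd.im_star] at hac hbd ⊢
  have := gaussian_same_sign_aux a.re a.im b.re b.im c.re c.im d.re d.im
    (by linarith) (by linarith) (by intro h'; apply hac; linarith) (by intro h'; apply hbd; linarith)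
  nlinarith [this]
end

section
/- Let a, b, c, d ∈ ℤ[i] with a·d - b·c = 1. Then (Im(b·conj(c)) - Im(a·conj(d)))² ≤ 4·Re(a·conj(c))·Re(b·conj(d)). -/
/-- Discriminant inequality for determinant-one matrices over the Gaussian
integers. -/
theorem gaussian_discriminant (a b c d : GaussianInt) (h : a * d - b * c = 1) :
    ((b * star c).im - (a * star d).im) ^ 2 ≤
      4 * (a * star c).re * (b * star d).re := by
  have h1 : (a * d - b * c).re = 1 := by rw [h]; rfl
  have h2 : (a * d - b * c).im = 0 := by rw [h]; rfl
  simp only [Zsqrtd.re_mul, Zsqrtd.im_mul, Zsqrtd.re_sub, Zsqrtd.im_sub,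
    Zsqrtd.re_star, Zsqrtd.im_star] at h1 h2 ⊢
  set X : ℤ := a.im * d.im + b.re * c.re with hX
  set Y : ℤ := a.im * d.re - b.im * c.re with hY
  have key : Y ^ 2 - (a.re * c.re + a.im * c.im) * (b.re * d.re + b.im * d.im)
      = -(X * (X + 1)) := by
    rw [hX, hY]; linear_combination (-(a.im * d.im + b.re * c.re)) * h1 +
      (a.im * d.re - b.im * c.re) * h2
  have hXnn : 0 ≤ X * (X + 1) := by
    rcases le_or_gt 0 X with hx | hx
    · positivity
    · have h3 : X + 1 ≤ 0 := by omega
      nlinarith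
  have hd : b.re * -c.im + b.im * c.re - (a.re * -d.im + a.im * d.re) = -2 * Y := by
    rw [hY]; linarith
  rw [hd]
  nlinarith [key, hXnn]
end

section
/- Let a, b, c, d ∈ ℤ[i] with a·d - b·c = 1 and suppose Re(a·conj(c)) = 0 and Re(b·conj(d)) = 0 (equivalently Re(a·conj(c) + b·conj(d)) = 0). Then either all of Im(a), Re(b), Re(c), Im(d) are zero, or all of Re(a), Im(b), Im(c), Re(d) are zero. -/
/-!
Let `M = (a b; c d)` and `J = diag(1, -1)`. Since `det M = 1`, the off-diagonal entries of
`M⁻¹ (J M̄ J)` are `-(a c̄ + ā c)` and `-(b d̄ + b̄ d)`, which vanish by hypothesis, so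
`J M̄ J = M diag(u, ū)` with `u ū = 1`. The unit `u = 1` gives `Γ₀⁺` and `u = -1` gives `Γ₀⁻`;
`u = ±i` is impossible because then `1 + u`, of norm `2`, divides `a`, `b` and hence `det M`.
-/

namespace Zsqrtd

variable {d : ℤ}

theorem mul_star_add_star_mul_eq_zero {a c : ℤ√d} (h : (a * star c).re = 0) :
    a * star c + star a * c = 0 := by
  have : a * star c + star (a * star c) = 0 := by
    ext
    · rw [re_add, re_star, h, add_zero, re_zero]
    · rw [im_add, im_star, add_neg_cancel, im_zero]
  simpa [mul_comm] using this

theorem im_eq_zero_of_star_eq {z : ℤ√d} (h : star z = z) : z.im = 0 := by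
  have := congrArg im h
  rw [im_star] at this
  omega

theorem re_eq_zero_of_star_eq_neg {z : ℤ√d} (h : star z = -z) : z.re = 0 := by
  have := congrArg re h
  rw [re_star, re_neg] at this
  omega

theorem star_eq_neg_of_re_eq_zero {z : ℤ√d} (h : z.re = 0) : star z = -z := by
  ext <;> simp [h]

end Zsqrtd

section StarRing

variable {R : Type*} [CommRing R] [StarRing R] {a b c d : R}

theorem exists_star_eq_mul_diag (h : a * d - b * c = 1) (hac : a * star c + star a * c = 0)
    (hbd : b * star d + star b * d = 0) :
    ∃ u : R, u * star u = 1 ∧ star a = u * a ∧ star b = -(star u * b) ∧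
      star c = -(u * c) ∧ star d = star u * d := by
  have hs : star a * star d - star b * star c = 1 := by
    simpa [mul_comm] using congrArg star h
  set u := d * star a + b * star c
  have hu : star u = a * star d + c * star b := by simp [u, mul_comm]
  have ha : star a = u * a := by linear_combination (-star a) * h - b * hac
  have hb : star b = -(star u * b) := by rw [hu]; linear_combination (-star b) * h + a * hbd
  have hc : star c = -(u * c) := by linear_combination (-star c) * h + d * hac
  have hd : star d = star u * d := by rw [hu]; linear_combination (-star d) * h - c * hbd
  refine ⟨u, ?_, ha, hb, hc, hd⟩
  -- `u ū = u ū det M = det (M diag(u, ū)) = det (J M̄ J) = conj (det M) = 1`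
  linear_combination (-(u * star u)) * h - (star u * d) * ha - star a * hd - (u * c) * hb +
    star b * hc + hs

end StarRing

namespace GaussianInt

theorem eq_one_or_eq_neg_one_or_re_eq_zero {u : GaussianInt} (hu : u * star u = 1) :
    u = 1 ∨ u = -1 ∨ (u.re = 0 ∧ u.im * u.im = 1) := by
  have hn : u.re * u.re + u.im * u.im = 1 := by
    have := congrArg Zsqrtd.re hu
    simp only [Int.reduceNeg, Zsqrtd.re_mul, Zsqrtd.re_star, Zsqrtd.im_star, neg_mul, one_mul,
      mul_neg, neg_neg, Zsqrtd.re_one] at this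
    linarith
  by_cases him : u.im = 0
  · rw [him, mul_zero, add_zero, mul_self_eq_one_iff] at hn
    rcases hn with hre | hre
    · exact Or.inl (Zsqrtd.ext hre him)
    · exact Or.inr (Or.inl (Zsqrtd.ext hre him))
  · have : 0 < u.im * u.im := mul_self_pos.mpr him
    have hre : u.re = 0 := mul_self_eq_zero.mp (by nlinarith [mul_self_nonneg u.re])
    exact Or.inr (Or.inr ⟨hre, by simpa [hre] using hn⟩)

theorem mul_sub_mul_ne_one {u a b : GaussianInt} (c d : GaussianInt) (hre : u.re = 0)
    (him : u.im * u.im = 1) (ha : star a = u * a) (hb : star b = u * b) : a * d - b * c ≠ 1 := by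
  intro h
  have ha' := congrArg Zsqrtd.re ha
  have hb' := congrArg Zsqrtd.re hb
  have hre' := congrArg Zsqrtd.re h
  have him' := congrArg Zsqrtd.im h
  simp only [Int.reduceNeg, Zsqrtd.re_star, Zsqrtd.re_mul, hre, zero_mul, neg_mul, one_mul,
    zero_add, Zsqrtd.re_sub, Zsqrtd.re_one, Zsqrtd.im_sub, Zsqrtd.im_mul, Zsqrtd.im_one]
    at ha' hb' hre' him'
  rw [ha', hb'] at hre' him'
  have : 2 * (b.im * c.im - a.im * d.im) = 1 := by
    linear_combination hre' + u.im * him' + (a.im * d.im - b.im * c.im) * him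
  omega

end GaussianInt

/-- A Gaussian-integer matrix of determinant one with
`Re(a·conj c) = Re(b·conj d) = 0` lies in `Γ₀⁺ ∪ Γ₀⁻`. -/
theorem gaussian_singular_classification (a b c d : GaussianInt)
    (h : a * d - b * c = 1)
    (hac : (a * star c).re = 0) (hbd : (b * star d).re = 0) :
    (a.im = 0 ∧ b.re = 0 ∧ c.re = 0 ∧ d.im = 0) ∨
      (a.re = 0 ∧ b.im = 0 ∧ c.im = 0 ∧ d.re = 0) := by
  obtain ⟨u, hu, ha, hb, hc, hd⟩ := exists_star_eq_mul_diag h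
    (Zsqrtd.mul_star_add_star_mul_eq_zero hac) (Zsqrtd.mul_star_add_star_mul_eq_zero hbd)
  rcases GaussianInt.eq_one_or_eq_neg_one_or_re_eq_zero hu with rfl | rfl | ⟨hre, him⟩
  · simp only [star_one, one_mul] at ha hb hc hd
    exact Or.inl ⟨Zsqrtd.im_eq_zero_of_star_eq ha, Zsqrtd.re_eq_zero_of_star_eq_neg hb,
      Zsqrtd.re_eq_zero_of_star_eq_neg hc, Zsqrtd.im_eq_zero_of_star_eq hd⟩
  · simp only [star_neg, star_one, neg_one_mul, neg_neg] at ha hb hc hd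
    exact Or.inr ⟨Zsqrtd.re_eq_zero_of_star_eq_neg ha, Zsqrtd.im_eq_zero_of_star_eq hb,
      Zsqrtd.im_eq_zero_of_star_eq hc, Zsqrtd.re_eq_zero_of_star_eq_neg hd⟩
  · rw [Zsqrtd.star_eq_neg_of_re_eq_zero hre, neg_mul, neg_neg] at hb
    exact absurd h (GaussianInt.mul_sub_mul_ne_one c d hre him ha hb)
end

section
/- Let G be a locally compact unimodular group (or just a discrete group), G₀ ⊆ G a subgroup, and m : G → ℂ bounded and left G₀-invariant. If m satisfies (m(g⁻¹) - m(h))·(m(g·h) - m(g)) = 0 for all g ∈ G \ G₀ and h ∈ G, then for the Fourier multiplier T_m on the group von Neumann algebra, the Cotlar identity E⊥[T_m(f)·T_m(f)*] = E⊥[T_m(f·T_m(f)*) + T_m(f·T_m(f)*)* - T_m(T_m(f·f*)*)] holds for all f in the span of {λ_g}, where E is the conditional expectation onto L(G₀). -/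
open scoped Classical

/-- The Fourier multiplier `T_m` on the group algebra: `λ_g ↦ m(g)·λ_g`. -/
noncomputable def Tmul {G : Type*} [Group G] (m : G → ℂ)
    (f : MonoidAlgebra ℂ G) : MonoidAlgebra ℂ G :=
  f.coeff.sum fun g c => MonoidAlgebra.single g (m g * c)

/-- The adjoint (star) on the group algebra: `f*(g) = conj (f (g⁻¹))`. -/
noncomputable def starAlg {G : Type*} [Group G]
    (f : MonoidAlgebra ℂ G) : MonoidAlgebra ℂ G :=
  f.coeff.sum fun g c => MonoidAlgebra.single g⁻¹ (starRingEnd ℂ c)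

/-- The trace-preserving conditional expectation onto `L(G₀)`, i.e. the
multiplier with symbol the indicator function of the subgroup `G₀`. -/
noncomputable def condExp {G : Type*} [Group G] (G₀ : Subgroup G)
    (f : MonoidAlgebra ℂ G) : MonoidAlgebra ℂ G :=
  f.coeff.sum fun g c => if g ∈ G₀ then MonoidAlgebra.single g c else 0

section Aux

variable {G : Type*} [Group G]

@[simp] lemma ma_sub_apply (u v : MonoidAlgebra ℂ G) (x : G) :
    (u - v).coeff x = u.coeff x - v.coeff x := Finsupp.sub_apply u.coeff v.coeff x

@[simp] lemma ma_add_apply (u v : MonoidAlgebra ℂ G) (x : G) :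
    (u + v).coeff x = u.coeff x + v.coeff x := Finsupp.add_apply u.coeff v.coeff x

@[simp] lemma Tmul_zero (m : G → ℂ) : Tmul m (0 : MonoidAlgebra ℂ G) = 0 := by
  simp [Tmul]

@[simp] lemma Tmul_single (m : G → ℂ) (g : G) (c : ℂ) :
    Tmul m (MonoidAlgebra.single g c) = MonoidAlgebra.single g (m g * c) := by
  simp [Tmul, MonoidAlgebra.coeff_single, Finsupp.sum_single_index]

lemma Tmul_add (m : G → ℂ) (u v : MonoidAlgebra ℂ G) :
    Tmul m (u + v) = Tmul m u + Tmul m v := by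
  unfold Tmul
  rw [MonoidAlgebra.coeff_add, Finsupp.sum_add_index] <;> simp [mul_add, MonoidAlgebra.single_add]

lemma Tmul_add' (m : G → ℂ) (u v : MonoidAlgebra ℂ G) :
    Tmul m (u + v) = Tmul m u + Tmul m v := Tmul_add m u v

@[simp] lemma starAlg_zero : starAlg (0 : MonoidAlgebra ℂ G) = 0 := by
  simp [starAlg]

@[simp] lemma starAlg_single (g : G) (c : ℂ) :
    starAlg (MonoidAlgebra.single g c) = MonoidAlgebra.single g⁻¹ (starRingEnd ℂ c) := by
  simp [starAlg, MonoidAlgebra.coeff_single, Finsupp.sum_single_index]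

lemma starAlg_add (u v : MonoidAlgebra ℂ G) :
    starAlg (u + v) = starAlg u + starAlg v := by
  unfold starAlg
  rw [MonoidAlgebra.coeff_add, Finsupp.sum_add_index] <;> simp [map_add, MonoidAlgebra.single_add]

lemma starAlg_add' (u v : MonoidAlgebra ℂ G) :
    starAlg (u + v) = starAlg u + starAlg v := starAlg_add u v

lemma condExp_apply (G₀ : Subgroup G) (f : MonoidAlgebra ℂ G) (x : G) :
    (condExp G₀ f).coeff x = if x ∈ G₀ then f.coeff x else 0 := by
  classical
  rw [condExp, MonoidAlgebra.coeff_finsuppSum, Finsupp.sum_apply]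
  have h1 : (f.coeff.sum fun g c => ((if g ∈ G₀ then MonoidAlgebra.single g c else 0 :
      MonoidAlgebra ℂ G)).coeff x)
      = f.coeff.sum fun g c => if g = x then (if x ∈ G₀ then c else 0) else 0 := by
    refine Finsupp.sum_congr fun g _ => ?_
    by_cases h : g ∈ G₀ <;> by_cases h2 : g = x <;>
      first
        | (subst h2; simp [h, MonoidAlgebra.coeff_single, Finsupp.single_apply])
        | simp [h, h2, MonoidAlgebra.coeff_single, Finsupp.single_apply]
  rw [h1, Finsupp.sum_ite_eq' f.coeff x (fun _ c => if x ∈ G₀ then c else 0)]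
  by_cases hs : x ∈ f.coeff.support
  · simp [hs]
  · rw [Finsupp.notMem_support_iff] at hs
    simp [hs]

lemma key_single_single (G₀ : Subgroup G) (m : G → ℂ)
    (hcot : ∀ g : G, g ∉ G₀ → ∀ h : G,
      (m g⁻¹ - m h) * (m (g * h) - m g) = 0)
    (g : G) (c : ℂ) (h : G) (d : ℂ) (x : G) (hx : x ∉ G₀)
    (u v : MonoidAlgebra ℂ G)
    (hu : u = MonoidAlgebra.single g c) (hv : v = MonoidAlgebra.single h d) :
    (Tmul m u * starAlg (Tmul m v)).coeff x
      = (Tmul m (u * starAlg (Tmul m v))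
          + starAlg (Tmul m (v * starAlg (Tmul m u)))
          - Tmul m (starAlg (Tmul m (v * starAlg u)))).coeff x := by
  classical
  subst hu hv
  by_cases he : g * h⁻¹ = x
  · subst he
    have h0 := hcot (g * h⁻¹) hx h
    rw [mul_inv_rev, inv_inv, inv_mul_cancel_right] at h0
    simp only [Tmul_single, starAlg_single, MonoidAlgebra.single_mul_single,
      mul_inv_rev, inv_inv, map_mul, Complex.conj_conj, ma_add_apply,
      ma_sub_apply, MonoidAlgebra.coeff_single, Finsupp.single_apply, eq_self_iff_true, if_true]
    rcases mul_eq_zero.mp h0 with h1 | h1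
    · have h2 : m (h * g⁻¹) = m h := by linear_combination h1
      rw [h2]; ring
    · have h2 : m g = m (g * h⁻¹) := by linear_combination h1
      rw [← h2]; ring
  · simp only [Tmul_single, starAlg_single, MonoidAlgebra.single_mul_single,
      mul_inv_rev, inv_inv, map_mul, Complex.conj_conj, ma_add_apply,
      ma_sub_apply, MonoidAlgebra.coeff_single, Finsupp.single_apply, if_neg he]
    ring

lemma key (G₀ : Subgroup G) (m : G → ℂ)
    (hcot : ∀ g : G, g ∉ G₀ → ∀ h : G,
      (m g⁻¹ - m h) * (m (g * h) - m g) = 0)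
    (u v : MonoidAlgebra ℂ G) (x : G) (hx : x ∉ G₀) :
    (Tmul m u * starAlg (Tmul m v)).coeff x
      = (Tmul m (u * starAlg (Tmul m v))
          + starAlg (Tmul m (v * starAlg (Tmul m u)))
          - Tmul m (starAlg (Tmul m (v * starAlg u)))).coeff x := by
  induction u using MonoidAlgebra.induction_linear with
  | zero => simp
  | add u₁ u₂ ih1 ih2 =>
    simp only [Tmul_add, Tmul_add', starAlg_add, starAlg_add', add_mul, mul_add,
      ma_add_apply, ma_sub_apply] at ih1 ih2 ⊢
    linear_combination ih1 + ih2
  | single g c =>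
    induction v using MonoidAlgebra.induction_linear with
    | zero => simp
    | add v₁ v₂ ih1 ih2 =>
      simp only [Tmul_add, Tmul_add', starAlg_add, starAlg_add', add_mul, mul_add,
        ma_add_apply, ma_sub_apply] at ih1 ih2 ⊢
      linear_combination ih1 + ih2
    | single h d => exact key_single_single G₀ m hcot g c h d x hx _ _ rfl rfl

end Aux

/-- The closed factorization formula implies the noncommutative Cotlar
identity for the Fourier multiplier `T_m` relative to `L(G₀)`. -/
theorem cotlar_identity_of_factorization {G : Type*} [Group G]
    (G₀ : Subgroup G) (m : G → ℂ)
    (hbdd : ∃ C : ℝ, ∀ g : G, ‖m g‖ ≤ C)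
    (hinv : ∀ k ∈ G₀, ∀ g : G, m (k * g) = m g)
    (hcot : ∀ g : G, g ∉ G₀ → ∀ h : G,
      (m g⁻¹ - m h) * (m (g * h) - m g) = 0)
    (f : MonoidAlgebra ℂ G) :
    (Tmul m f * starAlg (Tmul m f)
        - condExp G₀ (Tmul m f * starAlg (Tmul m f))) =
      ((Tmul m (f * starAlg (Tmul m f))
          + starAlg (Tmul m (f * starAlg (Tmul m f)))
          - Tmul m (starAlg (Tmul m (f * starAlg f))))
        - condExp G₀ (Tmul m (f * starAlg (Tmul m f))
          + starAlg (Tmul m (f * starAlg (Tmul m f)))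
          - Tmul m (starAlg (Tmul m (f * starAlg f))))) := by
  classical
  ext x
  simp only [ma_sub_apply, condExp_apply]
  by_cases hx : x ∈ G₀
  · simp [hx]
  · simp only [hx, if_false, sub_zero]
    exact key G₀ m hcot f f x hx
end

section
/- Let G act on a set X, fix x₀ ∈ X, and let X₀ ⊆ X \ {x₀} be such that the following combinatorial configuration holds in a tree structure; concretely, in the setting where X is a simplicial tree and X₀ is one connected component of X \ {x₀}: define m : G → ℂ by m(g) = 0 if g·x₀ = x₀ and g·X₀ = X₀; m(g) = C₁ if g·x₀ = x₀ and g·X₀ ≠ X₀; m(g) = C₁ if g·x₀ ∉ X₀ ∪ {x₀}; m(g) = C₂ if g·x₀ ∈ X₀, for distinct constants C₁ ≠ C₂. Then m satisfies (m(g⁻¹) - m(h))·(m(g·h) - m(g)) = 0 for all g ∉ G₀ := Stab(x₀) ∩ {g : g·X₀ = X₀} and all h ∈ G. -/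
open scoped Pointwise

/-- The graph obtained from `T` by deleting the vertex `x₀`. -/
def SimpleGraph.deleteVert {V : Type*} (T : SimpleGraph V) (x₀ : V) :
    SimpleGraph V where
  Adj u v := T.Adj u v ∧ u ≠ x₀ ∧ v ≠ x₀
  symm := ⟨fun u v ⟨h, hu, hv⟩ => ⟨h.symm, hv, hu⟩⟩
  loopless := ⟨fun u h => T.irrefl h.1⟩

namespace CotlarAux

open SimpleGraph

variable {V : Type*} {T : SimpleGraph V}

lemma walk_avoid {p u w : V} (W : T.Walk u w) (hp : p ∉ W.support) :
    (T.deleteVert p).Reachable u w := by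
  induction W with
  | nil => exact Reachable.refl _
  | @cons a b c hab q ih =>
      rw [Walk.support_cons, List.mem_cons] at hp
      push_neg at hp
      refine (Adj.reachable ?_).trans (ih hp.2)
      exact ⟨hab, fun e => hp.1 e.symm, fun e => hp.2 (e ▸ q.start_mem_support)⟩

lemma ne_of_reachD {p : V} : ∀ {u w : V}, (T.deleteVert p).Walk u w → u ≠ p → w ≠ p
  | _, _, Walk.nil, hu => hu
  | _, _, Walk.cons h q, _ => ne_of_reachD q h.2.2

lemma ne_of_reach {p u w : V} (h : (T.deleteVert p).Reachable u w) (hu : u ≠ p) : w ≠ p := by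
  obtain ⟨W⟩ := h
  exact ne_of_reachD W hu

variable {G : Type*} [Group G] [MulAction G V]

lemma reach_smul (hact : ∀ (g : G) (u v : V), T.Adj (g • u) (g • v) ↔ T.Adj u v)
    (g : G) {p u w : V} (h : (T.deleteVert p).Reachable u w) :
    (T.deleteVert (g • p)).Reachable (g • u) (g • w) := by
  obtain ⟨W⟩ := h
  induction W with
  | nil => exact Reachable.refl _
  | @cons a b c hab q ih =>
      refine (Adj.reachable ?_).trans ih
      exact ⟨(hact g _ _).2 hab.1, fun e => hab.2.1 (smul_left_cancel g e),
        fun e => hab.2.2 (smul_left_cancel g e)⟩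

lemma sep (hconn : T.Connected) (u b p : V) (hu : u ≠ p) (hb : b ≠ p) :
    (T.deleteVert p).Reachable u b ∨ (T.deleteVert b).Reachable u p := by
  classical
  obtain ⟨W⟩ := hconn.preconnected u p
  set P : T.Path u p := W.toPath with hP
  by_cases hbP : b ∈ (P : T.Walk u p).support
  · left
    refine walk_avoid ((P : T.Walk u p).takeUntil b hbP) ?_
    intro hpQ
    have hsp : (P : T.Walk u p).support =
        ((P : T.Walk u p).takeUntil b hbP).support ++
        ((P : T.Walk u p).dropUntil b hbP).support.tail := by
      conv_lhs => rw [← Walk.take_spec (P : T.Walk u p) hbP]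
      exact Walk.support_append _ _
    have hnd := P.2.support_nodup
    rw [hsp, List.nodup_append] at hnd
    exact hnd.2.2 p hpQ p (Walk.end_mem_tail_support_of_ne hb _) rfl
  · right
    exact walk_avoid _ hbP

lemma comp_smul (hact : ∀ (g : G) (u v : V), T.Adj (g • u) (g • v) ↔ T.Adj u v)
    (g : G) (x₀ v : V) (hg : g • x₀ = x₀) :
    g • {u | (T.deleteVert x₀).Reachable v u} =
      {u | (T.deleteVert x₀).Reachable (g • v) u} := by
  have hg' : g⁻¹ • x₀ = x₀ := by rw [inv_smul_eq_iff]; exact hg.symm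
  ext w
  rw [Set.mem_smul_set_iff_inv_smul_mem, Set.mem_setOf_eq, Set.mem_setOf_eq]
  constructor
  · intro hw
    have := reach_smul hact g hw
    rw [hg, smul_inv_smul] at this
    exact this
  · intro hw
    have := reach_smul hact g⁻¹ hw
    rw [inv_smul_smul, hg'] at this
    exact this

end CotlarAux

/-- Model 2: the multiplier built from one distinguished connected component
`X₀` of `T \ {x₀}` satisfies Cotlar's factorization identity relative to
`G₀ = Stab(x₀) ∩ {g : g·X₀ = X₀}`. -/
theorem cotlar_model_two {G V : Type*} [Group G] [MulAction G V]
    (T : SimpleGraph V) (hconn : T.Connected) (hacyc : T.IsAcyclic)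
    (hact : ∀ (g : G) (u v : V), T.Adj (g • u) (g • v) ↔ T.Adj u v)
    (x₀ : V) (X₀ : Set V)
    (hX₀ : ∃ v : V, v ≠ x₀ ∧ X₀ = {u | (T.deleteVert x₀).Reachable v u})
    (C₁ C₂ : ℂ) (hC : C₁ ≠ C₂)
    (m : G → ℂ)
    (hm0 : ∀ g : G, g • x₀ = x₀ → g • X₀ = X₀ → m g = 0)
    (hm1 : ∀ g : G, g • x₀ = x₀ → g • X₀ ≠ X₀ → m g = C₁)
    (hm2 : ∀ g : G, g • x₀ ≠ x₀ → g • x₀ ∉ X₀ → m g = C₁)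
    (hm3 : ∀ g : G, g • x₀ ∈ X₀ → m g = C₂) :
    ∀ g : G, ¬(g • x₀ = x₀ ∧ g • X₀ = X₀) → ∀ h : G,
      (m g⁻¹ - m h) * (m (g * h) - m g) = 0 := by
  obtain ⟨v, hv, rfl⟩ := hX₀
  intro g hg h
  have hx0X : ¬ (T.deleteVert x₀).Reachable v x₀ :=
    fun hr => (CotlarAux.ne_of_reach hr hv) rfl
  have invfix : ∀ k : G, k⁻¹ • x₀ = x₀ ↔ k • x₀ = x₀ := by
    intro k; rw [inv_smul_eq_iff]; exact eq_comm
  -- the central separation argument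
  have keyArg : h • x₀ ≠ x₀ → g⁻¹ • x₀ ≠ x₀ →
      ¬ (T.deleteVert x₀).Reachable (h • x₀) (g⁻¹ • x₀) →
      (T.deleteVert x₀).Reachable ((g * h) • x₀) (g • x₀) ∧ (g * h) • x₀ ≠ x₀ := by
    intro hhne hgine hnr
    have hgne : g • x₀ ≠ x₀ := fun e => hgine ((invfix g).2 e)
    have h1 : ¬ (T.deleteVert (g • x₀)).Reachable (g • (h • x₀)) x₀ := by
      intro hr
      apply hnr
      have h2 := CotlarAux.reach_smul hact g⁻¹ hr
      simp only [inv_smul_smul] at h2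
      exact h2
    have hsep := CotlarAux.sep hconn ((g * h) • x₀) x₀ (g • x₀)
      (by rw [mul_smul]; exact fun e => hhne (smul_left_cancel g e))
      (fun e => hgne e.symm)
    rcases hsep with h2 | h2
    · rw [mul_smul] at h2
      exact absurd h2 h1
    · refine ⟨h2, fun e => ?_⟩
      rw [e] at h2
      exact (CotlarAux.ne_of_reach h2.symm hgne) rfl
  -- matching the multiplier values of g*h and g
  have mmatch : (T.deleteVert x₀).Reachable ((g * h) • x₀) (g • x₀) →
      (g * h) • x₀ ≠ x₀ → g • x₀ ≠ x₀ → m (g * h) = m g := by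
    intro hr hne hgne
    by_cases hgX : (T.deleteVert x₀).Reachable v (g • x₀)
    · have h1 : (T.deleteVert x₀).Reachable v ((g * h) • x₀) := hgX.trans hr.symm
      rw [hm3 _ h1, hm3 _ hgX]
    · have h1 : ¬ (T.deleteVert x₀).Reachable v ((g * h) • x₀) :=
        fun hm => hgX (SimpleGraph.Reachable.trans hm hr)
      rw [hm2 _ hne h1, hm2 _ hgne hgX]
  by_cases hgi2 : (T.deleteVert x₀).Reachable v (g⁻¹ • x₀)
  · -- m g⁻¹ = C₂
    have hgine : g⁻¹ • x₀ ≠ x₀ := CotlarAux.ne_of_reach hgi2 hv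
    have hgne : g • x₀ ≠ x₀ := fun e => hgine ((invfix g).2 e)
    by_cases hh2 : (T.deleteVert x₀).Reachable v (h • x₀)
    · rw [hm3 _ hgi2, hm3 _ hh2, sub_self, zero_mul]
    · by_cases hhfix : h • x₀ = x₀
      · have e1 : (g * h) • x₀ = g • x₀ := by rw [mul_smul, hhfix]
        have : m (g * h) = m g := by
          by_cases hgX : (T.deleteVert x₀).Reachable v (g • x₀)
          · rw [hm3 _ (show (T.deleteVert x₀).Reachable v ((g * h) • x₀) from
              e1 ▸ hgX), hm3 _ hgX]
          · rw [hm2 _ (e1 ▸ hgne) (show ¬ (T.deleteVert x₀).Reachable v ((g * h) • x₀) from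
              e1 ▸ hgX), hm2 _ hgne hgX]
        rw [this, sub_self, mul_zero]
      · have hnr : ¬ (T.deleteVert x₀).Reachable (h • x₀) (g⁻¹ • x₀) :=
          fun hr => hh2 (hgi2.trans hr.symm)
        obtain ⟨hr, hne⟩ := keyArg hhfix hgine hnr
        rw [mmatch hr hne hgne, sub_self, mul_zero]
  · -- m g⁻¹ = C₁
    have hmgi : m g⁻¹ = C₁ := by
      by_cases hgifix : g⁻¹ • x₀ = x₀
      · have hgfix : g • x₀ = x₀ := (invfix g).1 hgifix
        have hgX : g • {u | (T.deleteVert x₀).Reachable v u} ≠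
            {u | (T.deleteVert x₀).Reachable v u} := fun e => hg ⟨hgfix, e⟩
        refine hm1 _ hgifix fun e => hgX ?_
        have := congrArg (fun s => g • s) e
        simpa [smul_inv_smul] using this.symm
      · exact hm2 _ hgifix hgi2
    by_cases hh2 : (T.deleteVert x₀).Reachable v (h • x₀)
    · -- c(h) = 2, go right
      have hhne : h • x₀ ≠ x₀ := CotlarAux.ne_of_reach hh2 hv
      by_cases hgifix : g⁻¹ • x₀ = x₀
      · -- g fixes x₀ but moves X₀
        have hgfix : g • x₀ = x₀ := (invfix g).1 hgifix
        have hgX : g • {u | (T.deleteVert x₀).Reachable v u} ≠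
            {u | (T.deleteVert x₀).Reachable v u} := fun e => hg ⟨hgfix, e⟩
        have hgv : ¬ (T.deleteVert x₀).Reachable v (g • v) := by
          intro hr
          apply hgX
          rw [CotlarAux.comp_smul hact g x₀ v hgfix]
          ext w
          simp only [Set.mem_setOf_eq]
          exact ⟨fun hw => hr.trans hw, fun hw => hr.symm.trans hw⟩
        have hgvne : g • v ≠ x₀ := fun e => hv (smul_left_cancel g (by rw [e, hgfix]))
        have h1 : (T.deleteVert x₀).Reachable (g • v) ((g * h) • x₀) := by
          have := CotlarAux.reach_smul hact g hh2
          rw [hgfix] at this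
          rw [mul_smul]
          exact this
        have hne : (g * h) • x₀ ≠ x₀ := CotlarAux.ne_of_reach h1 hgvne
        have hnot : ¬ (T.deleteVert x₀).Reachable v ((g * h) • x₀) :=
          fun hm => hgv (hm.trans h1.symm)
        rw [hm2 _ hne hnot, hm1 _ hgfix hgX, sub_self, mul_zero]
      · have hgne : g • x₀ ≠ x₀ := fun e => hgifix ((invfix g).2 e)
        have hnr : ¬ (T.deleteVert x₀).Reachable (h • x₀) (g⁻¹ • x₀) :=
          fun hr => hgi2 (hh2.trans hr)
        obtain ⟨hr, hne⟩ := keyArg hhne hgifix hnr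
        rw [mmatch hr hne hgne, sub_self, mul_zero]
    · by_cases hhfix : h • x₀ = x₀
      · by_cases hhX : h • {u | (T.deleteVert x₀).Reachable v u} =
            {u | (T.deleteVert x₀).Reachable v u}
        · -- c(h) = 0, classes of g*h and g agree
          have e1 : (g * h) • x₀ = g • x₀ := by rw [mul_smul, hhfix]
          have e2 : (g * h) • {u | (T.deleteVert x₀).Reachable v u} =
              g • {u | (T.deleteVert x₀).Reachable v u} := by rw [mul_smul, hhX]
          have : m (g * h) = m g := by
            by_cases hgX : (T.deleteVert x₀).Reachable v (g • x₀)
            · rw [hm3 _ (show (T.deleteVert x₀).Reachable v ((g * h) • x₀) from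
                e1 ▸ hgX), hm3 _ hgX]
            · by_cases hgfix2 : g • x₀ = x₀
              · have hgXne : g • {u | (T.deleteVert x₀).Reachable v u} ≠
                    {u | (T.deleteVert x₀).Reachable v u} := fun e => hg ⟨hgfix2, e⟩
                rw [hm1 _ (e1 ▸ hgfix2) (e2 ▸ hgXne), hm1 _ hgfix2 hgXne]
              · rw [hm2 _ (e1 ▸ hgfix2)
                  (show ¬ (T.deleteVert x₀).Reachable v ((g * h) • x₀) from e1 ▸ hgX),
                  hm2 _ hgfix2 hgX]
          rw [this, sub_self, mul_zero]
        · rw [hmgi, hm1 _ hhfix hhX, sub_self, zero_mul]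
      · rw [hmgi, hm2 _ hhfix hh2, sub_self, zero_mul]
end
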